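/- arXiv:1701.00849 — 3 statements merged into one kernel-verified Lean document; each statement's English description precedes it below -/
import Mathlib

section
/- For every integer k ≥ 1, there exists a unique p ∈ (0,1) satisfying the fixed point equation (1-p)^k = exp(-(1-(1-p)^k)/p). -/
open Real

theorem stmt_2 (k : ℕ) (hk : 1 ≤ k) :
    ∃! p : ℝ, p ∈ Set.Ioo (0 : ℝ) 1 ∧
      (1 - p) ^ k = Real.exp (-(1 - (1 - p) ^ k) / p) := by
  set F : ℝ → ℝ := fun p => k * Real.log (1 - p) + ∑ i ∈ Finset.range k, (1 - p) ^ i with hF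
  have geom : ∀ p : ℝ, p ≠ 0 → ∑ i ∈ Finset.range k, (1 - p) ^ i = (1 - (1 - p) ^ k) / p := by
    intro p hp
    rw [geom_sum_eq (by intro h; apply hp; linarith : (1:ℝ) - p ≠ 1),
      show (1:ℝ) - p - 1 = -p from by ring, div_neg, ← neg_div, neg_sub]
  have key : ∀ p ∈ Set.Ioo (0:ℝ) 1,
      ((1 - p) ^ k = Real.exp (-(1 - (1 - p) ^ k) / p) ↔ F p = 0) := by
    intro p hp
    have h1 : (0:ℝ) < 1 - p := by linarith [hp.2]
    have hpow : (0:ℝ) < (1 - p) ^ k := pow_pos h1 k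
    have hlogpow : Real.log ((1 - p) ^ k) = (k:ℝ) * Real.log (1 - p) := by rw [Real.log_pow]
    constructor
    · intro h
      have hl : (k:ℝ) * Real.log (1 - p) = -(1 - (1 - p) ^ k) / p := by
        have h2 := congrArg Real.log h
        rw [Real.log_exp] at h2
        rw [← hlogpow]; exact h2
      simp only [hF]
      rw [geom p (ne_of_gt hp.1)]
      rw [neg_div] at hl
      linarith
    · intro h
      simp only [hF] at h
      rw [geom p (ne_of_gt hp.1)] at h
      have hl : (k:ℝ) * Real.log (1 - p) = -(1 - (1 - p) ^ k) / p := by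
        rw [neg_div]; linarith
      rw [← hl, ← hlogpow, Real.exp_log hpow]
  have hk' : (1:ℝ) ≤ (k:ℝ) := by exact_mod_cast hk
  have anti : ∀ x ∈ Set.Ico (0:ℝ) 1, ∀ y ∈ Set.Ico (0:ℝ) 1, x < y → F y < F x := by
    intro x hx y hy hxy
    have h1 : (0:ℝ) < 1 - y := by linarith [hy.2]
    have hlog : Real.log (1 - y) < Real.log (1 - x) := Real.log_lt_log h1 (by linarith)
    have hsum : ∑ i ∈ Finset.range k, (1 - y) ^ i ≤ ∑ i ∈ Finset.range k, (1 - x) ^ i :=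
      Finset.sum_le_sum fun i _ => pow_le_pow_left₀ (le_of_lt h1) (by linarith) i
    have hmul : (k:ℝ) * Real.log (1 - y) < (k:ℝ) * Real.log (1 - x) :=
      mul_lt_mul_of_pos_left hlog (by linarith)
    simp only [hF]
    linarith
  set b : ℝ := 1 - Real.exp (-2) with hb
  have hexp1 : Real.exp (-2) < 1 := by
    rw [← Real.exp_zero]; exact Real.exp_lt_exp.mpr (by norm_num)
  have hexp0 : (0:ℝ) < Real.exp (-2) := Real.exp_pos _
  have hb0 : 0 < b := by rw [hb]; linarith
  have hb1 : b < 1 := by rw [hb]; linarith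
  have h1b : 1 - b = Real.exp (-2) := by rw [hb]; ring
  have hFb : F b < 0 := by
    have hsum : ∑ i ∈ Finset.range k, (1 - b) ^ i ≤ (k:ℝ) := by
      calc ∑ i ∈ Finset.range k, (1 - b) ^ i ≤ ∑ _i ∈ Finset.range k, (1:ℝ) :=
            Finset.sum_le_sum fun i _ => pow_le_one₀ (by rw [h1b]; positivity)
              (by rw [h1b]; linarith)
        _ = (k:ℝ) := by simp
    have hlog : Real.log (1 - b) = -2 := by rw [h1b, Real.log_exp]
    simp only [hF]
    rw [hlog]
    nlinarith
  have hF0 : F 0 = (k:ℝ) := by simp [hF]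
  have hcont : ContinuousOn F (Set.Icc 0 b) := by
    apply ContinuousOn.add
    · apply continuousOn_const.mul
      apply ContinuousOn.log ((continuous_const.sub continuous_id).continuousOn)
      intro x hx
      have : x ≤ b := hx.2
      have : 0 < 1 - x := by linarith
      exact ne_of_gt this
    · exact (continuous_finset_sum _ fun i _ =>
        (continuous_const.sub continuous_id).pow i).continuousOn
  have h0mem : (0:ℝ) ∈ Set.Ioo (F b) (F 0) := ⟨hFb, by rw [hF0]; linarith⟩
  obtain ⟨p, hpmem, hFp⟩ := intermediate_value_Ioo' (le_of_lt hb0) hcont h0mem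
  have hpIoo : p ∈ Set.Ioo (0:ℝ) 1 := ⟨hpmem.1, lt_trans hpmem.2 hb1⟩
  refine ⟨p, ⟨hpIoo, (key p hpIoo).mpr hFp⟩, ?_⟩
  rintro q ⟨hq, hqeq⟩
  have hFq : F q = 0 := (key q hq).mp hqeq
  by_contra hne
  rcases lt_or_gt_of_ne hne with h | h
  · have := anti q ⟨hq.1.le, hq.2⟩ p ⟨hpIoo.1.le, hpIoo.2⟩ h
    rw [hFp, hFq] at this; exact lt_irrefl 0 this
  · have := anti p ⟨hpIoo.1.le, hpIoo.2⟩ q ⟨hq.1.le, hq.2⟩ h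
    rw [hFp, hFq] at this; exact lt_irrefl 0 this
end

section
/- The function h(x) = x·(1 - e^{-(1-x)})/(1-x) - 2·(e^x - 1)/e is strictly decreasing on [0,1). In particular its derivative (e - e^x·(x² - 3x + 3))/(e·(1-x)²) is negative for all 0 ≤ x < 1. -/
/-!
Writing `u = e^{x-1}`, the quotient rule gives `h'(x) (1-x)² = 1 - u (x² - 3x + 3)`, so `h' < 0`
amounts to `e < e^x (x² - 3x + 3)` on `[0, 1)`. The right-hand side `g` has derivative
`e^x x (x - 1) < 0` on `(0, 1)`, hence decreases strictly on `[0, 1]` to `g 1 = e`.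
-/

open Real Set

lemma hasDerivAt_exp_mul_quadratic (x : ℝ) :
    HasDerivAt (fun x => exp x * (x ^ 2 - 3 * x + 3)) (exp x * (x * (x - 1))) x := by
  have hq : HasDerivAt (fun x : ℝ => x ^ 2 - 3 * x + 3) (2 * x - 3) x := by
    simpa using ((hasDerivAt_pow 2 x).sub ((hasDerivAt_id x).const_mul 3)).add_const 3
  exact ((hasDerivAt_exp x).mul hq).congr_deriv (by ring)

lemma strictAntiOn_exp_mul_quadratic :
    StrictAntiOn (fun x => exp x * (x ^ 2 - 3 * x + 3)) (Icc 0 1) := by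
  refine strictAntiOn_of_hasDerivWithinAt_neg (convex_Icc 0 1) (by fun_prop)
    (fun x _ => (hasDerivAt_exp_mul_quadratic x).hasDerivWithinAt) fun x hx => ?_
  rw [interior_Icc] at hx
  exact mul_neg_of_pos_of_neg (exp_pos x) (mul_neg_of_pos_of_neg hx.1 (sub_neg.mpr hx.2))

lemma exp_one_lt_exp_mul_quadratic {x : ℝ} (hx₀ : 0 ≤ x) (hx₁ : x < 1) :
    exp 1 < exp x * (x ^ 2 - 3 * x + 3) := by
  simpa using strictAntiOn_exp_mul_quadratic ⟨hx₀, hx₁.le⟩ ⟨zero_le_one, le_rfl⟩ hx₁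

lemma hasDerivAt_welfare_gap {x : ℝ} (hx : x ≠ 1) :
    HasDerivAt (fun x => x * (1 - exp (-(1 - x))) / (1 - x) - 2 * (exp x - 1) / exp 1)
      ((exp 1 - exp x * (x ^ 2 - 3 * x + 3)) / (exp 1 * (1 - x) ^ 2)) x := by
  have h1x : (1 : ℝ) - x ≠ 0 := sub_ne_zero.mpr hx.symm
  have hshift : HasDerivAt (fun x : ℝ => -(1 - x)) 1 x :=
    ((hasDerivAt_id' x).const_sub 1).neg.congr_deriv (neg_neg 1)
  have hnum : HasDerivAt (fun x => x * (1 - exp (-(1 - x))))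
      (1 * (1 - exp (-(1 - x))) + x * -(exp (-(1 - x)) * 1)) x :=
    (hasDerivAt_id x).mul (hshift.exp.const_sub 1)
  have hden : HasDerivAt (fun x : ℝ => 1 - x) (-1) x := by
    simpa using (hasDerivAt_id x).const_sub 1
  have hexp : HasDerivAt (fun x => 2 * (exp x - 1) / exp 1) (2 * (exp x * 1) / exp 1) x := by
    simpa using (((hasDerivAt_exp x).sub_const 1).const_mul 2).div_const (exp 1)
  refine ((hnum.div hden h1x).sub hexp).congr_deriv ?_
  have hu : exp (-(1 - x)) = exp x / exp 1 := by
    rw [← exp_sub]; ring_nf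
  rw [hu]
  field_simp
  ring

theorem stmt_6 :
    StrictAntiOn
      (fun x : ℝ => x * (1 - Real.exp (-(1 - x))) / (1 - x)
        - 2 * (Real.exp x - 1) / Real.exp 1)
      (Set.Ico (0 : ℝ) 1) ∧
    ∀ x : ℝ, 0 ≤ x → x < 1 →
      (Real.exp 1 - Real.exp x * (x ^ 2 - 3 * x + 3))
        / (Real.exp 1 * (1 - x) ^ 2) < 0 := by
  have hderiv_neg : ∀ x : ℝ, 0 ≤ x → x < 1 →
      (exp 1 - exp x * (x ^ 2 - 3 * x + 3)) / (exp 1 * (1 - x) ^ 2) < 0 := fun x hx₀ hx₁ =>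
    div_neg_of_neg_of_pos (sub_neg.mpr (exp_one_lt_exp_mul_quadratic hx₀ hx₁))
      (mul_pos (exp_pos 1) (pow_pos (sub_pos.mpr hx₁) 2))
  have hderiv : ∀ x ∈ Ico (0 : ℝ) 1, HasDerivAt _ _ x := fun x hx =>
    hasDerivAt_welfare_gap hx.2.ne
  refine ⟨strictAntiOn_of_hasDerivWithinAt_neg (convex_Ico 0 1) (HasDerivAt.continuousOn hderiv)
    (fun x hx => (hderiv x (interior_subset hx)).hasDerivWithinAt)
    (fun x hx => hderiv_neg x (interior_subset hx).1 (interior_subset hx).2), hderiv_neg⟩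
end

section
/- For all x ∈ [0,1), e - e^x·(x² - 3x + 3) < 0. -/
/-! The function `exp y * (y ^ 2 - 3 * y + 3)` has derivative `exp y * y * (y - 1)`, negative on
`(0, 1)`, so it strictly decreases on `[0, 1]` to its value `e` at `1`. -/

open Real Set

theorem hasDerivAt_exp_mul_sq_sub_three_mul_add_three (y : ℝ) :
    HasDerivAt (fun y => exp y * (y ^ 2 - 3 * y + 3)) (exp y * (y * (y - 1))) y := by
  have hquad : HasDerivAt (fun y : ℝ => y ^ 2 - 3 * y + 3) (2 * y - 3) y := by
    simpa using ((hasDerivAt_pow 2 y).sub ((hasDerivAt_id y).const_mul 3)).add_const 3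
  exact ((hasDerivAt_exp y).mul hquad).congr_deriv (by ring)

theorem strictAntiOn_exp_mul_sq_sub_three_mul_add_three :
    StrictAntiOn (fun y => exp y * (y ^ 2 - 3 * y + 3)) (Icc 0 1) := by
  refine strictAntiOn_of_hasDerivWithinAt_neg (convex_Icc 0 1) (by fun_prop)
    (fun y _ => (hasDerivAt_exp_mul_sq_sub_three_mul_add_three y).hasDerivWithinAt) ?_
  intro y hy
  rw [interior_Icc] at hy
  exact mul_neg_of_pos_of_neg (exp_pos y) (mul_neg_of_pos_of_neg hy.1 (sub_neg.mpr hy.2))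

theorem stmt_7 (x : ℝ) (hx0 : 0 ≤ x) (hx1 : x < 1) :
    Real.exp 1 - Real.exp x * (x ^ 2 - 3 * x + 3) < 0 := by
  have h := strictAntiOn_exp_mul_sq_sub_three_mul_add_three ⟨hx0, hx1.le⟩
    (right_mem_Icc.mpr zero_le_one) hx1
  norm_num at h
  linarith
end
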